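/- arXiv:math/0611444 — 2 statements merged into one kernel-verified Lean document; each statement's English description precedes it below -/
import Mathlib

section
/- In any group with elements s_{p,q} (1 ≤ p < q ≤ 4) satisfying the cactus group relations, with σ_{p,r,q} := s_{p,q} s_{r+1,q} s_{p,r} (and s_{a,a} = 1), the identity σ_{1,2,3} ∘ σ_{1,2,4} ∘ σ_{1,1,3} ∘ σ_{1,1,2} = σ_{1,1,4} ∘ σ_{1,2,3} holds. -/
/-!
Conjugation by `s 1 4` acts on the generators inside `[1, 4]` as the flip `i ↦ 5 - i` (R3).
Moving `s 1 4` to the right end of both sides therefore reduces the identity to the relation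
`s 2 4 * s 2 3 = s 3 4 * s 2 4` inside `[2, 4]` together with `s 1 2 ^ 2 = s 3 4 ^ 2 = 1`.
-/

theorem cactus_sigma_identity_four_general {G : Type*} [Group G] (s : ℕ → ℕ → G)
    (hrefl : ∀ a, s a a = 1)
    (hR1 : ∀ p q, 1 ≤ p → p < q → q ≤ 4 → s p q * s p q = 1)
    (hR3 : ∀ p q k l, 1 ≤ p → p < q → q ≤ 4 → p ≤ k → k < l → l ≤ q →
      s p q * s k l = s (p + q - l) (p + q - k) * s p q) :
    (s 1 3 * s 3 3 * s 1 2) * (s 1 4 * s 3 4 * s 1 2) *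
      (s 1 3 * s 2 3 * s 1 1) * (s 1 2 * s 2 2 * s 1 1) =
      (s 1 4 * s 2 4 * s 1 1) * (s 1 3 * s 3 3 * s 1 2) := by
  have push_right : ∀ x, s 1 4 * x = MulAut.conj (s 1 4) x * s 1 4 := fun x => by simp
  have flip : ∀ k l, 1 ≤ k → k < l → l ≤ 4 →
      MulAut.conj (s 1 4) (s k l) = s (1 + 4 - l) (1 + 4 - k) := fun k l hk hkl hl => by
    rw [MulAut.conj_apply, hR3 1 4 k l le_rfl (by norm_num) le_rfl hk hkl hl, mul_inv_cancel_right]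
  have sq12 := hR1 1 2 le_rfl (by norm_num) (by norm_num)
  have sq34 := hR1 3 4 (by norm_num) (by norm_num) le_rfl
  have braid : s 2 4 * s 2 3 = s 3 4 * s 2 4 := by
    simpa using hR3 2 4 2 3 (by norm_num) (by norm_num) le_rfl le_rfl (by norm_num) (by norm_num)
  calc _ = s 1 3 * s 1 2 * (s 1 4 * (s 3 4 * s 1 2 * s 1 3 * s 2 3 * s 1 2)) := by
          simp only [hrefl, mul_one, mul_assoc]
    _ = s 1 3 * (s 1 2 * s 1 2) * s 3 4 * (s 2 4 * s 2 3) * s 3 4 * s 1 4 := by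
          rw [push_right]; simp (disch := norm_num) only [map_mul, flip, mul_assoc]
    _ = s 1 3 * s 2 4 * s 3 4 * s 1 4 := by
          rw [sq12, braid]; simp [mul_assoc, ← mul_assoc (s 3 4) (s 3 4), sq34]
    _ = s 1 4 * (s 2 4 * s 1 3 * s 1 2) := by
          rw [push_right]; simp (disch := norm_num) only [map_mul, flip, mul_assoc]
    _ = _ := by simp only [hrefl, mul_one, mul_assoc]

/-- In any group with elements s_{p,q} (1 ≤ p < q ≤ 4) satisfying the cactus
group relations, with σ_{p,r,q} := s_{p,q} s_{r+1,q} s_{p,r} (and s_{a,a} = 1), the identity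
σ_{1,2,3} ∘ σ_{1,2,4} ∘ σ_{1,1,3} ∘ σ_{1,1,2} = σ_{1,1,4} ∘ σ_{1,2,3} holds. -/
theorem cactus_sigma_identity_four {G : Type*} [Group G] (s : ℕ → ℕ → G)
    (hrefl : ∀ a, s a a = 1)
    (hR1 : ∀ p q, 1 ≤ p → p < q → q ≤ 4 → s p q * s p q = 1)
    (hR2 : ∀ p q k l, 1 ≤ p → p < q → q ≤ 4 → 1 ≤ k → k < l → l ≤ 4 →
      (q < k ∨ l < p) → s p q * s k l = s k l * s p q)
    (hR3 : ∀ p q k l, 1 ≤ p → p < q → q ≤ 4 → p ≤ k → k < l → l ≤ q →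
      s p q * s k l = s (p + q - l) (p + q - k) * s p q) :
    (s 1 3 * s 3 3 * s 1 2) * (s 1 4 * s 3 4 * s 1 2) *
      (s 1 3 * s 2 3 * s 1 1) * (s 1 2 * s 2 2 * s 1 1) =
      (s 1 4 * s 2 4 * s 1 1) * (s 1 3 * s 3 3 * s 1 2) :=
  cactus_sigma_identity_four_general s hrefl hR1 hR3
end

section
/- Suppose a category has a commutor σ_{A,B} : A ⊗ B → B ⊗ A satisfying σ_{A,B} ∘ σ_{B,A} = id (axiom C2) and the coboundary hexagon-analogue axiom (C3): σ_{A, C⊗B} ∘ (1_A ⊗ σ_{B,C}) = σ_{B⊗A, C} ∘ (σ_{A,B} ⊗ 1_C). Then for four objects, the composite σ_{1,1,3} ∘ σ_{1,1,4} ∘ σ_{1,2,3} ∘ σ_{1,1,2} ∘ σ_{1,2,3} : A₁A₂A₃A₄ → A₃A₄A₁A₂ equals σ_{A₁⊗A₂, A₃⊗A₄}. -/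
open CategoryTheory MonoidalCategory

section

variable {C : Type*} [Category C] [MonoidalCategory C]

/-- σ_{1,2,3} = σ_{A₁⊗A₂,A₃} ⊗ 1 on four objects (left-parenthesized). -/
def sigma123 (σ : ∀ A B : C, A ⊗ B ≅ B ⊗ A) (X Y Z W : C) :
    ((X ⊗ Y) ⊗ Z) ⊗ W ⟶ ((Z ⊗ X) ⊗ Y) ⊗ W :=
  ((σ (X ⊗ Y) Z).hom ≫ (α_ Z X Y).inv) ▷ W

/-- σ_{1,1,2} = σ_{A₁,A₂} ⊗ 1 ⊗ 1 on four objects. -/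
def sigma112 (σ : ∀ A B : C, A ⊗ B ≅ B ⊗ A) (X Y Z W : C) :
    ((X ⊗ Y) ⊗ Z) ⊗ W ⟶ ((Y ⊗ X) ⊗ Z) ⊗ W :=
  ((σ X Y).hom ▷ Z) ▷ W

/-- σ_{1,1,3} = σ_{A₁,A₂⊗A₃} ⊗ 1 on four objects. -/
def sigma113 (σ : ∀ A B : C, A ⊗ B ≅ B ⊗ A) (X Y Z W : C) :
    ((X ⊗ Y) ⊗ Z) ⊗ W ⟶ ((Y ⊗ Z) ⊗ X) ⊗ W :=
  ((α_ X Y Z).hom ≫ (σ X (Y ⊗ Z)).hom) ▷ W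

/-- σ_{1,1,4} = σ_{A₁,A₂⊗A₃⊗A₄} on four objects. -/
def sigma114 (σ : ∀ A B : C, A ⊗ B ≅ B ⊗ A) (X Y Z W : C) :
    ((X ⊗ Y) ⊗ Z) ⊗ W ⟶ ((Y ⊗ Z) ⊗ W) ⊗ X :=
  ((α_ X Y Z).hom ▷ W) ≫ (α_ X (Y ⊗ Z) W).hom ≫ (σ X ((Y ⊗ Z) ⊗ W)).hom

/-- σ_{1,2,4} = σ_{A₁⊗A₂,A₃⊗A₄} on four objects. -/
def sigma124 (σ : ∀ A B : C, A ⊗ B ≅ B ⊗ A) (X Y Z W : C) :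
    ((X ⊗ Y) ⊗ Z) ⊗ W ⟶ ((Z ⊗ W) ⊗ X) ⊗ Y :=
  (α_ (X ⊗ Y) Z W).hom ≫ (σ (X ⊗ Y) (Z ⊗ W)).hom ≫ (α_ (Z ⊗ W) X Y).inv

/-- In a monoidal category with a commutor σ satisfying naturality (C1),
σ_{A,B} ∘ σ_{B,A} = id (C2), and the coboundary axiom (C3), the composite
σ_{1,1,3} ∘ σ_{1,1,4} ∘ σ_{1,2,3} ∘ σ_{1,1,2} ∘ σ_{1,2,3} : A₁A₂A₃A₄ → A₃A₄A₁A₂ equals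
σ_{1,2,4} = σ_{A₁⊗A₂, A₃⊗A₄}. -/
theorem coboundary_composite (σ : ∀ A B : C, A ⊗ B ≅ B ⊗ A)
    (nat : ∀ {A B A' B' : C} (f : A ⟶ A') (g : B ⟶ B'),
      (f ⊗ₘ g) ≫ (σ A' B').hom = (σ A B).hom ≫ (g ⊗ₘ f))
    (hC2 : ∀ A B : C, (σ A B).hom ≫ (σ B A).hom = 𝟙 (A ⊗ B))
    (hC3 : ∀ A B D : C,
      (α_ A B D).hom ≫ (A ◁ (σ B D).hom) ≫ (σ A (D ⊗ B)).hom =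
        ((σ A B).hom ▷ D) ≫ (σ (B ⊗ A) D).hom ≫ (α_ D B A).inv)
    (A₁ A₂ A₃ A₄ : C) :
    sigma123 σ A₁ A₂ A₃ A₄ ≫ sigma112 σ A₃ A₁ A₂ A₄ ≫ sigma123 σ A₁ A₃ A₂ A₄ ≫
        sigma114 σ A₂ A₁ A₃ A₄ ≫ sigma113 σ A₁ A₃ A₄ A₂ =
      sigma124 σ A₁ A₂ A₃ A₄ := by
  have natL : ∀ (A : C) {B B' : C} (g : B ⟶ B'),
      (A ◁ g) ≫ (σ A B').hom = (σ A B).hom ≫ (g ▷ A) := by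
    intro A B B' g
    simpa [id_tensorHom, tensorHom_id] using nat (𝟙 A) g
  have star : ∀ X Y Z : C,
      (σ (X ⊗ Y) Z).hom ≫ (α_ Z X Y).inv ≫ ((σ Z X).hom ▷ Y) ≫
        (σ (X ⊗ Z) Y).hom ≫ (α_ Y X Z).inv ≫ ((σ Y X).hom ▷ Z) =
        𝟙 ((X ⊗ Y) ⊗ Z) := by
    intro X Y Z
    have h1 : (σ (X ⊗ Y) Z).hom ≫ (α_ Z X Y).inv =
        ((σ X Y).hom ▷ Z) ≫ (α_ Y X Z).hom ≫ (Y ◁ (σ X Z).hom) ≫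
          (σ Y (Z ⊗ X)).hom := by
      rw [hC3 Y X Z, ← comp_whiskerRight_assoc, hC2, id_whiskerRight,
        Category.id_comp]
    rw [← Category.assoc, h1]
    slice_lhs 4 5 => rw [← natL Y (σ Z X).hom]
    slice_lhs 3 4 => rw [← MonoidalCategory.whiskerLeft_comp, hC2,
      MonoidalCategory.whiskerLeft_id]
    rw [Category.id_comp]
    slice_lhs 3 4 => rw [hC2 Y (X ⊗ Z)]
    rw [Category.id_comp, Iso.hom_inv_id_assoc, ← comp_whiskerRight, hC2,
      id_whiskerRight]
  have h45 : sigma114 σ A₂ A₁ A₃ A₄ ≫ sigma113 σ A₁ A₃ A₄ A₂ =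
      (α_ (A₂ ⊗ A₁) A₃ A₄).hom ≫ ((σ A₂ A₁).hom ▷ (A₃ ⊗ A₄)) ≫
        (σ (A₁ ⊗ A₂) (A₃ ⊗ A₄)).hom ≫ (α_ (A₃ ⊗ A₄) A₁ A₂).inv := by
    unfold sigma114 sigma113
    rw [comp_whiskerRight]
    slice_lhs 3 4 => rw [← natL A₂ (α_ A₁ A₃ A₄).hom]
    slice_lhs 4 5 => rw [← natL A₂ (σ A₁ (A₃ ⊗ A₄)).hom]
    have h3 : (A₂ ◁ (σ A₁ (A₃ ⊗ A₄)).hom) ≫ (σ A₂ ((A₃ ⊗ A₄) ⊗ A₁)).hom =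
        (α_ A₂ A₁ (A₃ ⊗ A₄)).inv ≫ ((σ A₂ A₁).hom ▷ (A₃ ⊗ A₄)) ≫
          (σ (A₁ ⊗ A₂) (A₃ ⊗ A₄)).hom ≫ (α_ (A₃ ⊗ A₄) A₁ A₂).inv := by
      rw [← hC3 A₂ A₁ (A₃ ⊗ A₄), Iso.inv_hom_id_assoc]
    slice_lhs 4 5 => rw [h3]
    slice_lhs 1 4 =>
      rw [show ((α_ A₂ A₁ A₃).hom ▷ A₄) ≫ (α_ A₂ (A₁ ⊗ A₃) A₄).hom ≫
          (A₂ ◁ (α_ A₁ A₃ A₄).hom) ≫ (α_ A₂ A₁ (A₃ ⊗ A₄)).inv =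
          (α_ (A₂ ⊗ A₁) A₃ A₄).hom from by coherence]
    simp only [Category.assoc]
  rw [h45]
  have hassoc : (α_ (A₂ ⊗ A₁) A₃ A₄).hom ≫ ((σ A₂ A₁).hom ▷ (A₃ ⊗ A₄)) =
      (((σ A₂ A₁).hom ▷ A₃) ▷ A₄) ≫ (α_ (A₁ ⊗ A₂) A₃ A₄).hom := by
    rw [associator_naturality_left]
  slice_lhs 4 5 => rw [hassoc]
  unfold sigma123 sigma112 sigma124
  slice_lhs 1 4 =>
    rw [← comp_whiskerRight, ← comp_whiskerRight, ← comp_whiskerRight]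
  rw [show ((σ (A₁ ⊗ A₂) A₃).hom ≫ (α_ A₃ A₁ A₂).inv) ≫ ((σ A₃ A₁).hom ▷ A₂) ≫
      ((σ (A₁ ⊗ A₃) A₂).hom ≫ (α_ A₂ A₁ A₃).inv) ≫ ((σ A₂ A₁).hom ▷ A₃) =
      𝟙 (((A₁ ⊗ A₂) ⊗ A₃)) from by
        simpa using star A₁ A₂ A₃,
    id_whiskerRight, Category.id_comp]
  simp only [Category.assoc]

end
end
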